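/- The Ramsey ideal R on [ω]² is not P⁻([ω]²): with A_n = {{k,i} : i > k ≥ n}, each A_n ∉ R, A_0 = [ω]², A_n \ A_{n+1} ∈ R, but there is no B ∉ R with B ⊆* A_n for all n. -/

import Mathlib

/-- `[ω]²`: unordered pairs of distinct natural numbers. -/
def Pairs : Type := {s : Sym2 ℕ // ¬ s.IsDiag}

/-- `[H]²` as a subset of `[ω]²`: the pairs with both elements in `H`. -/
def pairsIn (H : Set ℕ) : Set Pairs :=
  {s : Pairs | ∀ a : ℕ, a ∈ s.val → a ∈ H}

/-- The Ramsey ideal `R` on `[ω]²`: sets of pairs containing no `[H]²` for infinite `H`. -/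
def RamseyIdeal : Set (Set Pairs) :=
  {A : Set Pairs | ¬ ∃ H : Set ℕ, H.Infinite ∧ pairsIn H ⊆ A}

/-- `A_n = {{k,i} : i > k ≥ n}`, i.e. the pairs with both elements `≥ n`. -/
def Awit (n : ℕ) : Set Pairs :=
  {s : Pairs | ∀ a : ℕ, a ∈ s.val → n ≤ a}

/-!
A set of pairs all passing through one point `n` is Ramsey-null, since an infinite `H`
contains two points other than `n`; this gives `A_n \ A_{n+1} ∈ R`. Conversely, if
`[H]² ⊆ B` and `k ∈ H`, the infinitely many pairs `{k, i}` with `i ∈ H` lie in `B` but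
not in `A_{k+1}`, so `B ⊆* A_{k+1}` fails.
-/

namespace Pairs

def mk (a b : ℕ) (h : a ≠ b) : Pairs := ⟨s(a, b), Sym2.mk_isDiag_iff.not.mpr h⟩

theorem mk_mem_pairsIn {H : Set ℕ} {a b : ℕ} (h : a ≠ b) (ha : a ∈ H) (hb : b ∈ H) :
    mk a b h ∈ pairsIn H := by
  intro c hc
  rcases Sym2.mem_iff.mp hc with rfl | rfl <;> assumption

end Pairs

theorem infinite_setOf_mem_pairsIn_and_mem {H : Set ℕ} (hH : H.Infinite) {k : ℕ} (hk : k ∈ H) :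
    {s ∈ pairsIn H | k ∈ s.val}.Infinite := by
  have := (hH.sdiff (Set.finite_singleton k)).to_subtype
  let f (i : ↥(H \ {k})) : Pairs := Pairs.mk k i (Ne.symm i.2.2)
  have hf : Function.Injective f :=
    fun i j hij => Subtype.ext (Sym2.congr_right.mp (congrArg Subtype.val hij))
  refine (Set.infinite_range_of_injective hf).mono ?_
  rintro _ ⟨i, rfl⟩
  exact ⟨Pairs.mk_mem_pairsIn _ hk i.2.1, Sym2.mem_mk_left k i⟩

theorem mem_ramseyIdeal_of_forall_mem {A : Set Pairs} (n : ℕ) (h : ∀ s ∈ A, n ∈ s.val) :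
    A ∈ RamseyIdeal := by
  rintro ⟨H, hH, hHA⟩
  obtain ⟨a, ha, b, hb, hab⟩ := (hH.sdiff (Set.finite_singleton n)).nontrivial
  have hn := h _ (hHA (Pairs.mk_mem_pairsIn hab ha.1 hb.1))
  rcases Sym2.mem_iff.mp hn with rfl | rfl
  exacts [ha.2 rfl, hb.2 rfl]

theorem Awit_notMem_ramseyIdeal (n : ℕ) : Awit n ∉ RamseyIdeal :=
  fun h => h ⟨Set.Ici n, Set.Ici_infinite n, fun _ hs => hs⟩

theorem Awit_zero : Awit 0 = Set.univ :=
  Set.eq_univ_of_forall fun _ a _ => Nat.zero_le a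

theorem notMem_Awit_succ {s : Pairs} {n : ℕ} (h : n ∈ s.val) : s ∉ Awit (n + 1) :=
  fun hs => Nat.not_succ_le_self n (hs n h)

theorem mem_of_mem_Awit_diff_Awit_succ {s : Pairs} {n : ℕ} (hs : s ∈ Awit n \ Awit (n + 1)) :
    n ∈ s.val := by
  obtain ⟨hn, hn1⟩ := hs
  simp only [Awit, Set.mem_ofPred_eq, not_forall, not_le] at hn1
  obtain ⟨a, ha, hlt⟩ := hn1
  rwa [show a = n by have := hn a ha; omega] at ha

theorem not_exists_almost_subset_Awit :
    ¬ ∃ B : Set Pairs, B ∉ RamseyIdeal ∧ ∀ n, (B \ Awit n).Finite := by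
  rintro ⟨B, hB, hfin⟩
  obtain ⟨H, hH, hHB⟩ := not_not.mp hB
  obtain ⟨k, hk⟩ := hH.nonempty
  refine (infinite_setOf_mem_pairsIn_and_mem hH hk).mono ?_ (hfin (k + 1))
  exact fun s ⟨hs, hks⟩ => ⟨hHB hs, notMem_Awit_succ hks⟩

/-- The Ramsey ideal is not `P⁻([ω]²)`: each `A_n ∉ R`, `A_0 = [ω]²`,
`A_n \ A_{n+1} ∈ R`, but there is no `B ∉ R` with `B ⊆* A_n` for all `n`. -/
theorem ramsey_not_Pminus :
    (∀ n, Awit n ∉ RamseyIdeal) ∧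
    Awit 0 = (Set.univ : Set Pairs) ∧
    (∀ n, Awit n \ Awit (n + 1) ∈ RamseyIdeal) ∧
    ¬ ∃ B : Set Pairs, B ∉ RamseyIdeal ∧ ∀ n, (B \ Awit n).Finite :=
  ⟨Awit_notMem_ramseyIdeal, Awit_zero,
    fun n => mem_ramseyIdeal_of_forall_mem n fun _ => mem_of_mem_Awit_diff_Awit_succ,
    not_exists_almost_subset_Awit⟩
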